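/- In the logistic transition model P(R_{j,t} | R_{t-1}) = exp(aᵀu)/(1+exp(aᵀu)) with u = (u_{R_{-{i}}}, u_{R_{-{i}}}·R_{i,t-1}) and aᵀ = (a_1ᵀ, a_2ᵀ), the first-order Markov process satisfies I(R_i → R_j || R_{-{i,j}}) = 0 if and only if a_2 = 0. -/

import Mathlib

open Classical Finset

namespace Stmt9

variable {Ω : Type*}

/-- Probability of an event under a probability mass function on a finite sample space. -/
noncomputable def pr [Fintype Ω] (μ : Ω → ℝ) (A : Set Ω) : ℝ :=
  ∑ ω, if ω ∈ A then μ ω else 0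

/-- Conditional probability of `A` given `B`. -/
noncomputable def cpr [Fintype Ω] (μ : Ω → ℝ) (A B : Set Ω) : ℝ :=
  pr μ (A ∩ B) / pr μ B

/-- The event that the histories (times `< t`) of the processes with indices in `K`
agree with those of the outcome `ω₀`. -/
def histEq {m : ℕ} {α : Type*} (R : Fin m → ℕ → Ω → α) (K : Set (Fin m)) (t : ℕ)
    (ω₀ : Ω) : Set Ω :=
  {ω | ∀ k ∈ K, ∀ s < t, R k s ω = R k s ω₀}

/-- Directed information `I(R_i → R_j ‖ R_{-{i,j}})` over the horizon `[1,T]`: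
the average over `t` of the expected log-ratio of `P(R_{j,t} | R^{t-1})` to
`P(R_{j,t} | R_{-{i}}^{t-1})`. -/
noncomputable def DI [Fintype Ω] (μ : Ω → ℝ) {m : ℕ} {α : Type*}
    (R : Fin m → ℕ → Ω → α) (T : ℕ) (i j : Fin m) : ℝ :=
  (T : ℝ)⁻¹ * ∑ t ∈ Finset.Icc 1 T, ∑ ω, μ ω *
    Real.log
      (cpr μ {ω' | R j t ω' = R j t ω} (histEq R Set.univ t ω) /
        cpr μ {ω' | R j t ω' = R j t ω} (histEq R {k | k ≠ i} t ω))

/-- The linear form `aᵀ u` where `u = ⊗_k (1, R_{k,t-1})` is the Kronecker product over all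
processes: the component of `u` indexed by a subset `S` of processes is `∏_{k ∈ S} R_k`
(with the binary states viewed as `0/1`), and `a` assigns a coefficient to each subset. -/
noncomputable def linForm {m : ℕ} (a : Finset (Fin m) → ℝ) (v : Fin m → Bool) : ℝ :=
  ∑ S : Finset (Fin m), a S * ∏ k ∈ S, (if v k then (1 : ℝ) else 0)

/-!
Each summand `E log P(R_{j,t} | R^{t-1}) / P(R_{j,t} | R_{-i}^{t-1})` of the directed information
is a conditional mutual information. By `log x ≥ 1 - 1/x` and the tower property it is nonnegative,
and it vanishes exactly when the two conditional laws agree almost surely.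

If `a_2 = 0`, the logistic transition law does not depend on `R_{i,t-1}`, so it is also the law
of `R_{j,t}` given the coarser past, and every summand vanishes. Conversely, at `t = 1` both pasts
are states at time `0`, all of which have positive probability; so the transition law is invariant
under flipping coordinate `i`, hence so is `aᵀu` (the sigmoid is injective), and induction over
the subsets containing `i` forces `a_2 = 0`.
-/

lemma one_sub_div_le_log_div {q r : ℝ} (hq : 0 < q) (hr : 0 < r) :
    1 - r / q ≤ Real.log (q / r) := by
  simpa using Real.one_sub_inv_le_log_of_pos (div_pos hq hr)

lemma eq_of_log_div_eq_one_sub_div {q r : ℝ} (hq : 0 < q) (hr : 0 < r)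
    (h : Real.log (q / r) = 1 - r / q) : q = r := by
  by_contra hne
  have hx : r / q ≠ 1 := by rwa [Ne, div_eq_one_iff_eq hq.ne', eq_comm]
  have hlt := Real.log_lt_sub_one_of_pos (div_pos hr hq) hx
  rw [Real.log_div hr.ne' hq.ne'] at hlt
  rw [Real.log_div hq.ne' hr.ne'] at h
  linarith

section Conditioning

variable [Fintype Ω] {μ : Ω → ℝ} {β γ δ : Type*}

lemma pr_nonneg (hμ : ∀ ω, 0 ≤ μ ω) (A : Set Ω) : 0 ≤ pr μ A :=
  sum_nonneg fun ω _ => by split_ifs <;> simp [hμ ω]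

lemma le_pr (hμ : ∀ ω, 0 ≤ μ ω) {A : Set Ω} {ω : Ω} (h : ω ∈ A) : μ ω ≤ pr μ A := by
  simpa [h, pr] using single_le_sum (f := fun ω => if ω ∈ A then μ ω else 0)
    (fun ω _ => by split_ifs <;> simp [hμ ω]) (mem_univ ω)

lemma exists_pos_mem_of_pr_pos {A : Set Ω} (h : 0 < pr μ A) : ∃ ω ∈ A, 0 < μ ω := by
  obtain ⟨ω, -, hω⟩ := exists_lt_of_sum_lt (f := fun _ => (0 : ℝ)) (by simpa [pr] using h)
  by_cases hA : ω ∈ A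
  · exact ⟨ω, hA, by simpa [hA] using hω⟩
  · simp [hA] at hω

lemma sum_pr_inter_setOf_eq [Fintype δ] (X : Ω → δ) (B : Set Ω) :
    ∑ b, pr μ ({ω | X ω = b} ∩ B) = pr μ B := by
  simp only [pr]
  rw [sum_comm]
  refine sum_congr rfl fun ω _ => ?_
  by_cases hB : ω ∈ B <;> simp [hB]

lemma cpr_eq_cpr_of_bool (X : Ω → Bool) {B B' : Set Ω} (hB : pr μ B ≠ 0) (hB' : pr μ B' ≠ 0)
    {c : Bool} (h : cpr μ {ω | X ω = c} B = cpr μ {ω | X ω = c} B') (b : Bool) :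
    cpr μ {ω | X ω = b} B = cpr μ {ω | X ω = b} B' := by
  have total : ∀ B, pr μ B ≠ 0 → cpr μ {ω | X ω = c} B + cpr μ {ω | X ω = !c} B = 1 := by
    intro B hB
    have := sum_pr_inter_setOf_eq (μ := μ) X B
    rw [Fintype.sum_bool] at this
    rw [cpr, cpr, ← add_div, div_eq_one_iff_eq hB]
    cases c <;> simpa [add_comm] using this
  rcases Bool.eq_or_eq_not b c with rfl | rfl
  · exact h
  · linarith [total B hB, total B' hB']

lemma pr_setOf_eq_pos (hμ : ∀ ω, 0 ≤ μ ω) (φ : Ω → β) {ω : Ω} (hω : 0 < μ ω) :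
    0 < pr μ {ω' | φ ω' = φ ω} :=
  hω.trans_le (le_pr hμ rfl)

lemma mul_sum_fiber_div_pr (hμ : ∀ ω, 0 ≤ μ ω) (φ : Ω → β) {g : Ω → ℝ}
    (hg : ∀ ω ω', φ ω = φ ω' → g ω = g ω') (ω₀ : Ω) :
    μ ω₀ * ∑ ω, (if φ ω₀ = φ ω then μ ω * (g ω / pr μ {ω' | φ ω' = φ ω}) else 0) =
      μ ω₀ * g ω₀ := by
  have fiber : ∑ ω, (if φ ω₀ = φ ω then μ ω * (g ω / pr μ {ω' | φ ω' = φ ω}) else 0) =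
      (∑ ω, if ω ∈ {ω' | φ ω' = φ ω₀} then μ ω else 0) * (g ω₀ / pr μ {ω' | φ ω' = φ ω₀}) := by
    rw [sum_mul]
    refine sum_congr rfl fun ω _ => ?_
    by_cases h : φ ω₀ = φ ω
    · simp [h, hg ω₀ ω h]
    · simp [Ne.symm h, h]
  rcases (hμ ω₀).eq_or_lt with h0 | hpos
  · simp [← h0]
  · rw [fiber, ← pr, mul_div_cancel₀ _ (pr_setOf_eq_pos hμ φ hpos).ne']

/-- Tower property for the partition into fibers of `φ`. -/
lemma sum_ite_eq_sum_mul_cpr (hμ : ∀ ω, 0 ≤ μ ω) (X : Ω → δ) (φ : Ω → β) (b : δ)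
    {g : Ω → ℝ} (hg : ∀ ω ω', φ ω = φ ω' → g ω = g ω') :
    ∑ ω, (if X ω = b then μ ω * g ω else 0) =
      ∑ ω, μ ω * cpr μ {ω' | X ω' = b} {ω' | φ ω' = φ ω} * g ω := by
  calc ∑ ω, (if X ω = b then μ ω * g ω else 0)
      = ∑ ω', ∑ ω, if X ω' = b ∧ φ ω' = φ ω then
          μ ω' * (μ ω * (g ω / pr μ {ω'' | φ ω'' = φ ω})) else 0 := by
        refine sum_congr rfl fun ω' _ => ?_
        rw [← mul_sum_fiber_div_pr hμ φ hg ω', mul_sum]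
        by_cases hX : X ω' = b <;> simp [hX]
    _ = ∑ ω, ∑ ω', if X ω' = b ∧ φ ω' = φ ω then
          μ ω' * (μ ω * (g ω / pr μ {ω'' | φ ω'' = φ ω})) else 0 := sum_comm
    _ = ∑ ω, μ ω * cpr μ {ω' | X ω' = b} {ω' | φ ω' = φ ω} * g ω := by
        refine sum_congr rfl fun ω _ => ?_
        simp only [cpr, pr, Set.mem_inter_iff, Set.mem_ofPred_eq]
        rw [sum_div, mul_sum, sum_mul]
        refine sum_congr rfl fun ω' _ => ?_
        split_ifs <;> ring

/-- `P(X = X ω | φ = φ ω)`. -/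
noncomputable def condProb (μ : Ω → ℝ) (X : Ω → δ) (φ : Ω → β) (ω : Ω) : ℝ :=
  cpr μ {ω' | X ω' = X ω} {ω' | φ ω' = φ ω}

/-- `E[log P(X | φ) / P(X | ψ)]`: when `ψ` is a function of `φ`, this is the conditional mutual
information `I(X; φ | ψ)`. -/
noncomputable def condInfo (μ : Ω → ℝ) (X : Ω → δ) (φ : Ω → β) (ψ : Ω → γ) : ℝ :=
  ∑ ω, μ ω * Real.log (condProb μ X φ ω / condProb μ X ψ ω)

lemma condProb_pos (hμ : ∀ ω, 0 ≤ μ ω) (X : Ω → δ) (φ : Ω → β) {ω : Ω} (hω : 0 < μ ω) :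
    0 < condProb μ X φ ω :=
  div_pos (hω.trans_le (le_pr hμ ⟨rfl, rfl⟩)) (pr_setOf_eq_pos hμ φ hω)

lemma sum_mul_condProb_div_condProb_le [Fintype δ] (hμ : ∀ ω, 0 ≤ μ ω) (X : Ω → δ)
    {φ : Ω → β} {ψ : Ω → γ} (hψ : ∀ ω ω', φ ω = φ ω' → ψ ω = ψ ω') :
    ∑ ω, μ ω * (condProb μ X ψ ω / condProb μ X φ ω) ≤ ∑ ω, μ ω := by
  set q : δ → Ω → ℝ := fun b ω => cpr μ {ω' | X ω' = b} {ω' | φ ω' = φ ω}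
  set r : δ → Ω → ℝ := fun b ω => cpr μ {ω' | X ω' = b} {ω' | ψ ω' = ψ ω}
  have hr : ∀ b ω, 0 ≤ r b ω := fun b ω => div_nonneg (pr_nonneg hμ _) (pr_nonneg hμ _)
  calc ∑ ω, μ ω * (condProb μ X ψ ω / condProb μ X φ ω)
      = ∑ b, ∑ ω, if X ω = b then μ ω * (r b ω / q b ω) else 0 := by
        rw [sum_comm]
        exact sum_congr rfl fun ω _ => by simp [condProb, q, r]
    _ = ∑ b, ∑ ω, μ ω * q b ω * (r b ω / q b ω) := by
        refine sum_congr rfl fun b _ => sum_ite_eq_sum_mul_cpr hμ X φ b fun ω ω' h => ?_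
        simp only [q, r, h, hψ ω ω' h]
    _ ≤ ∑ b, ∑ ω, μ ω * r b ω := by
        refine sum_le_sum fun b _ => sum_le_sum fun ω _ => ?_
        rw [mul_assoc]
        refine mul_le_mul_of_nonneg_left ?_ (hμ ω)
        rcases eq_or_ne (q b ω) 0 with h | h
        · simp [h, hr b ω]
        · rw [mul_div_cancel₀ _ h]
    _ = ∑ ω, μ ω * ∑ b, r b ω := by
        rw [sum_comm]
        simp only [mul_sum]
    _ ≤ ∑ ω, μ ω := by
        refine sum_le_sum fun ω _ => mul_le_of_le_one_right (hμ ω) ?_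
        simp only [r, cpr, ← sum_div, sum_pr_inter_setOf_eq]
        exact div_self_le_one _

lemma mul_one_sub_condProb_div_le_mul_log (hμ : ∀ ω, 0 ≤ μ ω) (X : Ω → δ) (φ : Ω → β) (ψ : Ω → γ)
    (ω : Ω) :
    μ ω * (1 - condProb μ X ψ ω / condProb μ X φ ω) ≤
      μ ω * Real.log (condProb μ X φ ω / condProb μ X ψ ω) := by
  rcases (hμ ω).eq_or_lt with h0 | hpos
  · simp [← h0]
  · exact mul_le_mul_of_nonneg_left (one_sub_div_le_log_div (condProb_pos hμ X φ hpos)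
      (condProb_pos hμ X ψ hpos)) (hμ ω)

lemma sum_mul_one_sub_condProb_div_nonneg [Fintype δ] (hμ : ∀ ω, 0 ≤ μ ω) (X : Ω → δ)
    {φ : Ω → β} {ψ : Ω → γ} (hψ : ∀ ω ω', φ ω = φ ω' → ψ ω = ψ ω') :
    0 ≤ ∑ ω, μ ω * (1 - condProb μ X ψ ω / condProb μ X φ ω) := by
  simp only [mul_sub, mul_one, sum_sub_distrib]
  linarith [sum_mul_condProb_div_condProb_le hμ X hψ]

lemma condInfo_nonneg [Fintype δ] (hμ : ∀ ω, 0 ≤ μ ω) (X : Ω → δ)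
    {φ : Ω → β} {ψ : Ω → γ} (hψ : ∀ ω ω', φ ω = φ ω' → ψ ω = ψ ω') :
    0 ≤ condInfo μ X φ ψ :=
  (sum_mul_one_sub_condProb_div_nonneg hμ X hψ).trans
    (sum_le_sum fun ω _ => mul_one_sub_condProb_div_le_mul_log hμ X φ ψ ω)

lemma condInfo_eq_zero_iff [Fintype δ] (hμ : ∀ ω, 0 ≤ μ ω) (X : Ω → δ)
    {φ : Ω → β} {ψ : Ω → γ} (hψ : ∀ ω ω', φ ω = φ ω' → ψ ω = ψ ω') :
    condInfo μ X φ ψ = 0 ↔ ∀ ω, 0 < μ ω → condProb μ X φ ω = condProb μ X ψ ω := by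
  constructor
  · intro h ω hω
    have gap : ∀ ω ∈ univ, 0 ≤ μ ω * Real.log (condProb μ X φ ω / condProb μ X ψ ω) -
        μ ω * (1 - condProb μ X ψ ω / condProb μ X φ ω) :=
      fun ω _ => sub_nonneg.2 (mul_one_sub_condProb_div_le_mul_log hμ X φ ψ ω)
    have gap_sum : ∑ ω, (μ ω * Real.log (condProb μ X φ ω / condProb μ X ψ ω) -
        μ ω * (1 - condProb μ X ψ ω / condProb μ X φ ω)) = 0 := by
      refine le_antisymm ?_ (sum_nonneg gap)
      rw [sum_sub_distrib, ← condInfo, h]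
      linarith [sum_mul_one_sub_condProb_div_nonneg hμ X hψ]
    have := (sum_eq_zero_iff_of_nonneg gap).1 gap_sum ω (mem_univ ω)
    exact eq_of_log_div_eq_one_sub_div (condProb_pos hμ X φ hω) (condProb_pos hμ X ψ hω)
      (mul_left_cancel₀ hω.ne' (sub_eq_zero.1 this))
  · intro h
    refine sum_eq_zero fun ω _ => ?_
    rcases (hμ ω).eq_or_lt with h0 | hpos
    · simp [← h0]
    · rw [h ω hpos, div_self (condProb_pos hμ X ψ hpos).ne', Real.log_one, mul_zero]

lemma cpr_eq_of_cpr_eq_on_finer (hμ : ∀ ω, 0 ≤ μ ω)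
    (X : Ω → δ) {φ : Ω → β} {ψ : Ω → γ} (hψ : ∀ ω ω', φ ω = φ ω' → ψ ω = ψ ω') (b : δ)
    {p : Ω → ℝ} (hp : ∀ ω ω', ψ ω = ψ ω' → p ω = p ω')
    (hq : ∀ ω, 0 < μ ω → cpr μ {ω' | X ω' = b} {ω' | φ ω' = φ ω} = p ω)
    {ω₀ : Ω} (hω₀ : 0 < μ ω₀) :
    cpr μ {ω' | X ω' = b} {ω' | ψ ω' = ψ ω₀} = p ω₀ := by
  have joint : pr μ ({ω' | X ω' = b} ∩ {ω' | ψ ω' = ψ ω₀}) = p ω₀ * pr μ {ω' | ψ ω' = ψ ω₀} :=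
    calc pr μ ({ω' | X ω' = b} ∩ {ω' | ψ ω' = ψ ω₀})
        = ∑ ω, if X ω = b then μ ω * (if ψ ω = ψ ω₀ then 1 else 0) else 0 := by
          refine sum_congr rfl fun ω _ => ?_
          by_cases hX : X ω = b <;> by_cases hψω : ψ ω = ψ ω₀ <;> simp [hX, hψω]
      _ = ∑ ω, μ ω * cpr μ {ω' | X ω' = b} {ω' | φ ω' = φ ω} *
            (if ψ ω = ψ ω₀ then 1 else 0) :=
          sum_ite_eq_sum_mul_cpr hμ X φ b fun ω ω' h => by rw [hψ ω ω' h]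
      _ = p ω₀ * pr μ {ω' | ψ ω' = ψ ω₀} := by
          rw [pr, mul_sum]
          refine sum_congr rfl fun ω _ => ?_
          by_cases hψω : ψ ω = ψ ω₀
          · rcases (hμ ω).eq_or_lt with h0 | hpos
            · simp [← h0]
            · simp [hψω, hq ω hpos, hp ω ω₀ hψω, mul_comm]
          · simp [hψω]
  rw [cpr, joint, mul_div_cancel_right₀ _ (pr_setOf_eq_pos hμ ψ hω₀).ne']

end Conditioning

lemma exp_div_one_add_exp (x : ℝ) : Real.exp x / (1 + Real.exp x) = Real.sigmoid x := by
  rw [Real.sigmoid_def, Real.exp_neg]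
  field_simp
  ring

lemma linForm_indicator {m : ℕ} (a : Finset (Fin m) → ℝ) (W : Finset (Fin m)) :
    linForm a (fun k => decide (k ∈ W)) = ∑ S ∈ W.powerset, a S := by
  simp only [linForm, decide_eq_true_eq, prod_boole, mul_ite, mul_one, mul_zero, ← sum_filter]
  rw [← filter_subset_univ]
  simp only [subset_iff]

lemma forall_linForm_eq_iff {m : ℕ} {a : Finset (Fin m) → ℝ} {i : Fin m} :
    (∀ v w : Fin m → Bool, (∀ k, k ≠ i → v k = w k) → linForm a v = linForm a w) ↔
      ∀ S, i ∈ S → a S = 0 := by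
  constructor
  · intro h S
    induction S using Finset.strongInduction with | H S ih => ?_
    intro hi
    have split := sum_powerset_insert (notMem_erase i S) a
    rw [insert_erase hi, ← linForm_indicator, ← linForm_indicator,
      h (fun k => decide (k ∈ S)) (fun k => decide (k ∈ S.erase i)) fun k hk => by simp [hk],
      left_eq_add] at split
    rw [sum_eq_single_of_mem _ (mem_powerset_self _) fun T hT hne => ih _ ?_ (mem_insert_self i T),
      insert_erase hi] at split
    · exact split
    · have hT' := subset_erase.1 (mem_powerset.1 hT)
      refine ssubset_of_subset_of_ne (insert_subset hi hT'.1) fun heq => hne ?_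
      rw [← heq, erase_insert hT'.2]
  · intro ha v w hvw
    refine sum_congr rfl fun S _ => ?_
    by_cases hi : i ∈ S
    · simp [ha S hi]
    · congr 1
      exact prod_congr rfl fun k hk => by rw [hvw k (ne_of_mem_of_not_mem hk hi)]

section History

variable {m : ℕ} {α : Type*}

def past (R : Fin m → ℕ → Ω → α) (K : Set (Fin m)) (t : ℕ) (ω : Ω) : K → Fin t → α :=
  fun k s => R k s ω

lemma past_eq_past_iff {R : Fin m → ℕ → Ω → α} {K : Set (Fin m)} {t : ℕ} {ω ω' : Ω} :
    past R K t ω = past R K t ω' ↔ ∀ k ∈ K, ∀ s < t, R k s ω = R k s ω' := by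
  simp only [past, funext_iff, Subtype.forall, Fin.forall_iff]

lemma histEq_eq_setOf_past (R : Fin m → ℕ → Ω → α) (K : Set (Fin m)) (t : ℕ) (ω : Ω) :
    histEq R K t ω = {ω' | past R K t ω' = past R K t ω} := by
  ext ω'
  simp only [histEq, past_eq_past_iff, Set.mem_ofPred_eq]

lemma past_eq_past_of_subset {R : Fin m → ℕ → Ω → α} {K L : Set (Fin m)} (hKL : K ⊆ L)
    {t : ℕ} {ω ω' : Ω} (h : past R L t ω = past R L t ω') : past R K t ω = past R K t ω' :=
  past_eq_past_iff.2 fun k hk => past_eq_past_iff.1 h k (hKL hk)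

end History

section Model

variable [Fintype Ω] {μ : Ω → ℝ} {m : ℕ} {R : Fin m → ℕ → Ω → Bool} {i j : Fin m}
  {a : Finset (Fin m) → ℝ} {t : ℕ}

lemma condInfo_eq_zero_of_coeff_eq_zero (hμ : ∀ ω, 0 ≤ μ ω) (ht : 1 ≤ t)
    (hsupp : ∀ v : Fin m → Bool, 0 < pr μ {ω | ∀ k, R k (t - 1) ω = v k})
    (hmarkov : ∀ ω, 0 < μ ω → ∀ b : Bool,
      cpr μ {ω' | R j t ω' = b} (histEq R Set.univ t ω) =
        cpr μ {ω' | R j t ω' = b} {ω' | ∀ k, R k (t - 1) ω' = R k (t - 1) ω})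
    (hlogistic : ∀ v : Fin m → Bool,
      cpr μ {ω' | R j t ω' = true} {ω' | ∀ k, R k (t - 1) ω' = v k} =
        Real.exp (linForm a v) / (1 + Real.exp (linForm a v)))
    (ha : ∀ S : Finset (Fin m), i ∈ S → a S = 0) :
    condInfo μ (R j t) (past R Set.univ t) (past R {k | k ≠ i} t) = 0 := by
  simp only [histEq_eq_setOf_past] at hmarkov
  rw [condInfo_eq_zero_iff hμ _ fun ω ω' => past_eq_past_of_subset (Set.subset_univ _)]
  intro ω hω
  have hlaw : ∀ ω₁ ω₂, past R {k | k ≠ i} t ω₁ = past R {k | k ≠ i} t ω₂ → ∀ b,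
      cpr μ {ω' | R j t ω' = b} {ω' | ∀ k, R k (t - 1) ω' = R k (t - 1) ω₁} =
        cpr μ {ω' | R j t ω' = b} {ω' | ∀ k, R k (t - 1) ω' = R k (t - 1) ω₂} := by
    intro ω₁ ω₂ h
    have hlin := forall_linForm_eq_iff.2 ha (fun k => R k (t - 1) ω₁) (fun k => R k (t - 1) ω₂)
      fun k hk => past_eq_past_iff.1 h k hk (t - 1) (by omega)
    exact cpr_eq_cpr_of_bool _ (hsupp _).ne' (hsupp _).ne' (c := true)
      (by rw [hlogistic, hlogistic, hlin])
  exact (hmarkov ω hω _).trans (cpr_eq_of_cpr_eq_on_finer hμ (R j t)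
    (fun _ _ => past_eq_past_of_subset (Set.subset_univ _)) _ (fun ω₁ ω₂ h => hlaw ω₁ ω₂ h _)
    (hmarkov · · _) hω).symm

lemma coeff_eq_zero_of_condInfo_eq_zero (hμ : ∀ ω, 0 ≤ μ ω)
    (hsupp : ∀ v : Fin m → Bool, 0 < pr μ {ω | ∀ k, R k 0 ω = v k})
    (hmarkov : ∀ ω, 0 < μ ω → ∀ b : Bool,
      cpr μ {ω' | R j 1 ω' = b} (histEq R Set.univ 1 ω) =
        cpr μ {ω' | R j 1 ω' = b} {ω' | ∀ k, R k 0 ω' = R k 0 ω})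
    (hlogistic : ∀ v : Fin m → Bool,
      cpr μ {ω' | R j 1 ω' = true} {ω' | ∀ k, R k 0 ω' = v k} =
        Real.exp (linForm a v) / (1 + Real.exp (linForm a v)))
    (h : condInfo μ (R j 1) (past R Set.univ 1) (past R {k | k ≠ i} 1) = 0) :
    ∀ S : Finset (Fin m), i ∈ S → a S = 0 := by
  simp only [histEq_eq_setOf_past] at hmarkov
  have hq := (condInfo_eq_zero_iff hμ _
    fun ω ω' => past_eq_past_of_subset (Set.subset_univ _)).1 h
  have transition : ∀ ω, 0 < μ ω → Real.sigmoid (linForm a fun k => R k 0 ω) =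
      cpr μ {ω' | R j 1 ω' = true} {ω' | past R {k | k ≠ i} 1 ω' = past R {k | k ≠ i} 1 ω} := by
    intro ω hω
    rw [← exp_div_one_add_exp, ← hlogistic, ← hmarkov ω hω]
    exact cpr_eq_cpr_of_bool _ (pr_setOf_eq_pos hμ _ hω).ne' (pr_setOf_eq_pos hμ _ hω).ne'
      (hq ω hω) true
  refine forall_linForm_eq_iff.1 fun v w hvw => ?_
  obtain ⟨ωv, hv, hωv⟩ := exists_pos_mem_of_pr_pos (hsupp v)
  obtain ⟨ωw, hw, hωw⟩ := exists_pos_mem_of_pr_pos (hsupp w)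
  have hpast : past R {k | k ≠ i} 1 ωv = past R {k | k ≠ i} 1 ωw :=
    past_eq_past_iff.2 fun k hk s hs => by
      obtain rfl : s = 0 := by omega
      rw [hv k, hw k, hvw k hk]
  have := transition ωv hωv
  rw [hpast, ← transition ωw hωw, Real.sigmoid_inj] at this
  simpa only [funext hv, funext hw] using this

end Model

theorem di_zero_iff_a2_zero_general [Fintype Ω]
    (μ : Ω → ℝ) (hnn : ∀ ω, 0 ≤ μ ω)
    {m : ℕ} (R : Fin m → ℕ → Ω → Bool) (T : ℕ) (i j : Fin m)
    (hT : 1 ≤ T)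
    (a : Finset (Fin m) → ℝ)
    -- every joint state of the chain at each time has positive probability
    (hsupp : ∀ t ∈ Finset.Icc 1 T, ∀ v : Fin m → Bool,
      0 < pr μ {ω | ∀ k, R k (t - 1) ω = v k})
    -- first-order Markov property: the conditional law of `R_{j,t}` given the full past
    -- depends only on the previous states of all processes
    (hmarkov : ∀ t ∈ Finset.Icc 1 T, ∀ ω, 0 < μ ω → ∀ b : Bool,
      cpr μ {ω' | R j t ω' = b} (histEq R Set.univ t ω) =
        cpr μ {ω' | R j t ω' = b} {ω' | ∀ k, R k (t - 1) ω' = R k (t - 1) ω})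
    -- logistic transition probabilities
    (hlogistic : ∀ t ∈ Finset.Icc 1 T, ∀ v : Fin m → Bool,
      cpr μ {ω' | R j t ω' = true} {ω' | ∀ k, R k (t - 1) ω' = v k} =
        Real.exp (linForm a v) / (1 + Real.exp (linForm a v))) :
    DI μ R T i j = 0 ↔ ∀ S : Finset (Fin m), i ∈ S → a S = 0 := by
  have hDI : DI μ R T i j = (T : ℝ)⁻¹ *
      ∑ t ∈ Icc 1 T, condInfo μ (R j t) (past R Set.univ t) (past R {k | k ≠ i} t) := by
    simp only [DI, condInfo, condProb, histEq_eq_setOf_past]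
  have hnonneg : ∀ t ∈ Icc 1 T,
      0 ≤ condInfo μ (R j t) (past R Set.univ t) (past R {k | k ≠ i} t) := fun t _ =>
    condInfo_nonneg hnn _ fun _ _ => past_eq_past_of_subset (Set.subset_univ _)
  have h1 : 1 ∈ Icc 1 T := mem_Icc.2 ⟨le_rfl, hT⟩
  rw [hDI, mul_eq_zero, inv_eq_zero, Nat.cast_eq_zero, sum_eq_zero_iff_of_nonneg hnonneg]
  simp only [show T ≠ 0 by omega, false_or]
  constructor
  · exact fun h => coeff_eq_zero_of_condInfo_eq_zero hnn (hsupp 1 h1) (hmarkov 1 h1)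
      (hlogistic 1 h1) (h 1 h1)
  · exact fun ha t ht => condInfo_eq_zero_of_coeff_eq_zero hnn (mem_Icc.1 ht).1 (hsupp t ht)
      (hmarkov t ht) (hlogistic t ht) ha

/-- For the first-order Markov logistic transition model
`P(R_{j,t} = 1 | R_{t-1}) = exp(aᵀu)/(1+exp(aᵀu))` with
`u = (u_{R_{-{i}}}, u_{R_{-{i}}}·R_{i,t-1})`, the directed information
`I(R_i → R_j ‖ R_{-{i,j}})` vanishes if and only if `a_2 = 0`, i.e. all coefficients of
components of `u` containing the factor `R_{i,t-1}` are zero. -/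
theorem di_zero_iff_a2_zero [Fintype Ω]
    (μ : Ω → ℝ) (hnn : ∀ ω, 0 ≤ μ ω) (hsum : ∑ ω, μ ω = 1)
    {m : ℕ} (R : Fin m → ℕ → Ω → Bool) (T : ℕ) (i j : Fin m) (hij : i ≠ j)
    (hT : 1 ≤ T)
    (a : Finset (Fin m) → ℝ)
    -- every joint state of the chain at each time has positive probability
    (hsupp : ∀ t ∈ Finset.Icc 1 T, ∀ v : Fin m → Bool,
      0 < pr μ {ω | ∀ k, R k (t - 1) ω = v k})
    -- first-order Markov property: the conditional law of `R_{j,t}` given the full past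
    -- depends only on the previous states of all processes
    (hmarkov : ∀ t ∈ Finset.Icc 1 T, ∀ ω, 0 < μ ω → ∀ b : Bool,
      cpr μ {ω' | R j t ω' = b} (histEq R Set.univ t ω) =
        cpr μ {ω' | R j t ω' = b} {ω' | ∀ k, R k (t - 1) ω' = R k (t - 1) ω})
    -- logistic transition probabilities
    (hlogistic : ∀ t ∈ Finset.Icc 1 T, ∀ v : Fin m → Bool,
      cpr μ {ω' | R j t ω' = true} {ω' | ∀ k, R k (t - 1) ω' = v k} =
        Real.exp (linForm a v) / (1 + Real.exp (linForm a v))) :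
    DI μ R T i j = 0 ↔ ∀ S : Finset (Fin m), i ∈ S → a S = 0 :=
  di_zero_iff_a2_zero_general μ hnn R T i j hT a hsupp hmarkov hlogistic

end Stmt9
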